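/- Let p ≥ 3, 0 ≤ k ≤ p and 1 ≤ i ≤ p be integers. Then in ℤ[t]: Σ_{x ∈ M_p^k, x_i = −p} t^{sep_p^k(y_p, x)} equals t^{2p−i−1} · ζ_{p−1}^{k}(t) if i ≤ p − k, and equals t^{2p−i} · ζ_{p−1}^{k−1}(t) if i > p − k. -/

import Mathlib

open Polynomial Finset

/-- The set `M_p^k` of representative integer points for the regions of `𝒟_p^k`:
points with entries in `{±1, …, ±p}`, pairwise distinct absolute values, and
`x i ≠ -1` for the first `p - k` coordinates. -/
noncomputable def Mfin (p k : ℕ) : Finset (Fin p → ℤ) :=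
  (Fintype.piFinset fun _ : Fin p => Finset.Icc (-(p : ℤ)) (p : ℤ)).filter
    fun x => (∀ i, x i ≠ 0) ∧ (∀ i j, i ≠ j → |x i| ≠ |x j|) ∧
      ∀ i : Fin p, (i : ℕ) < p - k → x i ≠ -1

/-- The number of hyperplanes of `𝒟_p^k` separating `u` and `v`, for `u, v` on
none of the hyperplanes: hyperplanes `ker (x_i - x_j)` and `ker (x_i + x_j)` for
`i < j`, and `ker x_i` for the last `k` coordinates. -/
noncomputable def sep (p k : ℕ) (u v : Fin p → ℝ) : ℕ :=
  (Finset.univ.filter fun q : Fin p × Fin p =>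
      q.1 < q.2 ∧ (u q.1 - u q.2) * (v q.1 - v q.2) < 0).card +
  (Finset.univ.filter fun q : Fin p × Fin p =>
      q.1 < q.2 ∧ (u q.1 + u q.2) * (v q.1 + v q.2) < 0).card +
  (Finset.univ.filter fun i : Fin p => p - k ≤ (i : ℕ) ∧ u i * v i < 0).card

/-- Coercion of an integer point to a real point. -/
def toR {p : ℕ} (x : Fin p → ℤ) : Fin p → ℝ := fun i => (x i : ℝ)

/-- The base point `y_p = (p, p-1, …, 1)`. -/
noncomputable def ypt (p : ℕ) : Fin p → ℝ := fun i => (p : ℝ) - (i : ℝ)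

/-- The rank-generating function of the poset of regions of `𝒟_p^k` with respect
to the region of `y_p`. -/
noncomputable def zeta (p k : ℕ) : Polynomial ℤ :=
  ∑ x ∈ Mfin p k, Polynomial.X ^ sep p k (ypt p) (toR x)

/-- `F e = 1 + t + ⋯ + t^e`. -/
noncomputable def Fpoly (e : ℕ) : Polynomial ℤ :=
  ∑ j ∈ Finset.range (e + 1), Polynomial.X ^ j

/-- The hyperplanes of the arrangement `𝒟_p^k` in `ℝ^p`. -/
def hyps (p k : ℕ) : Set (Set (Fin p → ℝ)) :=
  {H | (∃ i j : Fin p, i < j ∧ H = {x | x i - x j = 0}) ∨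
       (∃ i j : Fin p, i < j ∧ H = {x | x i + x j = 0}) ∨
       (∃ i : Fin p, p - k ≤ (i : ℕ) ∧ H = {x | x i = 0})}

/-- The complement of the union of the hyperplanes of `𝒟_p^k`. -/
def comp (p k : ℕ) : Set (Fin p → ℝ) := (⋃ H ∈ hyps p k, H)ᶜ

/-- Deletion of the `i`-th coordinate. -/
def deleteCoord {p : ℕ} (i : Fin p) (x : Fin p → ℤ) : Fin (p - 1) → ℤ :=
  fun j =>
    if (j : ℕ) < (i : ℕ) then x ⟨j, by have := j.isLt; omega⟩
    else x ⟨(j : ℕ) + 1, by have := j.isLt; omega⟩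

-- helpers
lemma ypt_pos (p : ℕ) (a : Fin p) : 0 < ypt p a := by
  have : (a : ℝ) < p := by exact_mod_cast a.isLt
  simp only [ypt]; linarith

lemma ypt_sub_pos {p : ℕ} {a b : Fin p} (h : a < b) : 0 < ypt p a - ypt p b := by
  have : (a : ℝ) < b := by exact_mod_cast h
  simp only [ypt]; linarith

lemma mul_neg_left_iff {c w : ℝ} (hc : 0 < c) : c * w < 0 ↔ w < 0 :=
  ⟨fun h => by nlinarith, fun h => mul_neg_of_pos_of_neg hc h⟩

lemma mem_Mfin {p k : ℕ} {x : Fin p → ℤ} : x ∈ Mfin p k ↔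
    (∀ j, |x j| ≤ (p : ℤ)) ∧ (∀ j, x j ≠ 0) ∧ (∀ a b, a ≠ b → |x a| ≠ |x b|) ∧
    ∀ j : Fin p, (j : ℕ) < p - k → x j ≠ -1 := by
  simp [Mfin, Fintype.mem_piFinset, Finset.mem_Icc, abs_le, forall_and, and_assoc]

lemma succAbove_val {m : ℕ} (i : Fin (m+1)) (j : Fin m) :
    ((i.succAbove j : Fin (m+1)) : ℕ) = if (j : ℕ) < (i : ℕ) then (j : ℕ) else (j : ℕ) + 1 := by
  rcases lt_or_ge (j.castSucc) i with h | h
  · rw [Fin.succAbove_of_castSucc_lt _ _ h]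
    have : (j : ℕ) < (i : ℕ) := h
    simp [this]
  · rw [Fin.succAbove_of_le_castSucc _ _ h]
    have : ¬ ((j : ℕ) < (i : ℕ)) := by
      have : (i : ℕ) ≤ (j : ℕ) := h
      omega
    simp [this]

lemma filterA_eq (p : ℕ) (y : Fin p → ℤ) :
    (Finset.univ.filter fun q : Fin p × Fin p =>
      q.1 < q.2 ∧ (ypt p q.1 - ypt p q.2) * (toR y q.1 - toR y q.2) < 0)
    = Finset.univ.filter fun q : Fin p × Fin p => q.1 < q.2 ∧ y q.1 < y q.2 := by
  apply Finset.filter_congr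
  intro q _
  apply and_congr_right
  intro hlt
  rw [mul_neg_left_iff (ypt_sub_pos hlt), sub_neg]
  simp only [toR]
  exact Int.cast_lt

lemma filterB_eq (p : ℕ) (y : Fin p → ℤ) :
    (Finset.univ.filter fun q : Fin p × Fin p =>
      q.1 < q.2 ∧ (ypt p q.1 + ypt p q.2) * (toR y q.1 + toR y q.2) < 0)
    = Finset.univ.filter fun q : Fin p × Fin p => q.1 < q.2 ∧ y q.1 + y q.2 < 0 := by
  apply Finset.filter_congr
  intro q _
  apply and_congr_right
  intro _
  rw [mul_neg_left_iff (add_pos (ypt_pos p q.1) (ypt_pos p q.2))]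
  simp only [toR]
  constructor <;> intro h <;> exact_mod_cast h

lemma filterC_eq (p k : ℕ) (y : Fin p → ℤ) :
    (Finset.univ.filter fun j : Fin p => p - k ≤ (j : ℕ) ∧ ypt p j * toR y j < 0)
    = Finset.univ.filter fun j : Fin p => p - k ≤ (j : ℕ) ∧ y j < 0 := by
  apply Finset.filter_congr
  intro j _
  apply and_congr_right
  intro _
  rw [mul_neg_left_iff (ypt_pos p j)]
  simp only [toR]
  exact_mod_cast Iff.rfl


lemma countA (m : ℕ) (i : Fin (m+1)) (x : Fin (m+1) → ℤ)
    (hx : x i = -((m : ℤ)+1)) (hb : ∀ j, j ≠ i → |x j| ≤ (m : ℤ)) :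
    (Finset.univ.filter fun q : Fin (m+1) × Fin (m+1) => q.1 < q.2 ∧ x q.1 < x q.2).card
    = (m - (i : ℕ)) +
      (Finset.univ.filter fun q : Fin m × Fin m =>
        q.1 < q.2 ∧ x (i.succAbove q.1) < x (i.succAbove q.2)).card := by
  classical
  have hsplit := Finset.card_filter_add_card_filter_not
    (s := Finset.univ.filter fun q : Fin (m+1) × Fin (m+1) => q.1 < q.2 ∧ x q.1 < x q.2)
    (p := fun q : Fin (m+1) × Fin (m+1) => q.1 = i ∨ q.2 = i)
  rw [Finset.filter_filter, Finset.filter_filter] at hsplit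
  have h1 : (Finset.univ.filter fun q : Fin (m+1) × Fin (m+1) =>
      (q.1 < q.2 ∧ x q.1 < x q.2) ∧ (q.1 = i ∨ q.2 = i)).card = m - (i : ℕ) := by
    have hc : (Finset.univ.filter fun q : Fin (m+1) × Fin (m+1) =>
        (q.1 < q.2 ∧ x q.1 < x q.2) ∧ (q.1 = i ∨ q.2 = i)).card = (Finset.Ioi i).card := by
      symm
      apply Finset.card_nbij (fun b => (i, b))
      · intro b hb'
        simp only [Finset.mem_coe, Finset.mem_Ioi] at hb'
        have hne : b ≠ i := ne_of_gt hb'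
        have := abs_le.mp (hb b hne)
        simp only [Finset.mem_coe, Finset.mem_filter, Finset.mem_univ, true_and]
        exact ⟨⟨hb', by omega⟩, by simp⟩
      · intro a _ b _ h
        simpa using congrArg Prod.snd h
      · intro q hq
        simp only [Finset.coe_filter, Set.mem_setOf_eq, Finset.mem_univ, true_and] at hq
        obtain ⟨⟨hlt, hxlt⟩, htouch⟩ := hq
        rcases htouch with h | h
        · refine ⟨q.2, by simp [Finset.mem_Ioi, ← h, hlt], ?_⟩
          exact Prod.ext h.symm rfl
        · exfalso
          have hne : q.1 ≠ i := by rw [← h]; exact ne_of_lt hlt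
          have := abs_le.mp (hb q.1 hne)
          rw [h] at hxlt
          omega
    rw [hc, Fin.card_Ioi]
    omega
  have h2 : (Finset.univ.filter fun q : Fin (m+1) × Fin (m+1) =>
      (q.1 < q.2 ∧ x q.1 < x q.2) ∧ ¬(q.1 = i ∨ q.2 = i)).card
      = (Finset.univ.filter fun q : Fin m × Fin m =>
        q.1 < q.2 ∧ x (i.succAbove q.1) < x (i.succAbove q.2)).card := by
    symm
    apply Finset.card_nbij (fun q => (i.succAbove q.1, i.succAbove q.2))
    · intro q hq
      simp only [Finset.mem_coe, Finset.mem_filter, Finset.mem_univ, true_and] at hq ⊢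
      exact ⟨⟨Fin.succAbove_lt_succAbove_iff.2 hq.1, hq.2⟩,
        by simp [Fin.succAbove_ne]⟩
    · intro a _ b _ h
      have h1' := congrArg Prod.fst h
      have h2' := congrArg Prod.snd h
      simp only at h1' h2'
      exact Prod.ext (Fin.succAbove_right_injective h1') (Fin.succAbove_right_injective h2')
    · intro q hq
      simp only [Finset.coe_filter, Set.mem_setOf_eq, Finset.mem_univ, true_and] at hq
      obtain ⟨⟨hlt, hxx⟩, hni⟩ := hq
      push_neg at hni
      obtain ⟨a, ha⟩ := Fin.exists_succAbove_eq hni.1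
      obtain ⟨b, hbb⟩ := Fin.exists_succAbove_eq hni.2
      refine ⟨(a, b), ?_, ?_⟩
      · simp only [Finset.coe_filter, Set.mem_setOf_eq, Finset.mem_univ, true_and]
        constructor
        · rw [← Fin.succAbove_lt_succAbove_iff (p := i), ha, hbb]; exact hlt
        · rw [ha, hbb]; exact hxx
      · simp [ha, hbb]
  omega

lemma countB (m : ℕ) (i : Fin (m+1)) (x : Fin (m+1) → ℤ)
    (hx : x i = -((m : ℤ)+1)) (hb : ∀ j, j ≠ i → |x j| ≤ (m : ℤ)) :
    (Finset.univ.filter fun q : Fin (m+1) × Fin (m+1) => q.1 < q.2 ∧ x q.1 + x q.2 < 0).card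
    = m + (Finset.univ.filter fun q : Fin m × Fin m =>
        q.1 < q.2 ∧ x (i.succAbove q.1) + x (i.succAbove q.2) < 0).card := by
  classical
  have hsplit := Finset.card_filter_add_card_filter_not
    (s := Finset.univ.filter fun q : Fin (m+1) × Fin (m+1) => q.1 < q.2 ∧ x q.1 + x q.2 < 0)
    (p := fun q : Fin (m+1) × Fin (m+1) => q.1 = i ∨ q.2 = i)
  rw [Finset.filter_filter, Finset.filter_filter] at hsplit
  have h1 : (Finset.univ.filter fun q : Fin (m+1) × Fin (m+1) =>
      (q.1 < q.2 ∧ x q.1 + x q.2 < 0) ∧ (q.1 = i ∨ q.2 = i)).card = m := by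
    have hc : (Finset.univ.filter fun q : Fin (m+1) × Fin (m+1) =>
        (q.1 < q.2 ∧ x q.1 + x q.2 < 0) ∧ (q.1 = i ∨ q.2 = i)).card
        = (Finset.univ.erase i).card := by
      symm
      apply Finset.card_nbij (fun j => if i < j then (i, j) else (j, i))
      · intro j hj
        simp only [Finset.mem_coe, Finset.mem_erase, Finset.mem_univ, and_true] at hj
        have := abs_le.mp (hb j hj)
        rcases lt_or_ge i j with h | h
        · simp only [if_pos h, Finset.mem_coe, Finset.mem_filter, Finset.mem_univ, true_and]
          exact ⟨⟨h, by omega⟩, by simp⟩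
        · have hlt : j < i := lt_of_le_of_ne h hj
          simp only [if_neg (not_lt.2 (le_of_lt hlt)), Finset.mem_coe, Finset.mem_filter, Finset.mem_univ, true_and]
          exact ⟨⟨hlt, by omega⟩, by simp⟩
      · intro a ha b hb' h
        simp only [Finset.coe_erase, Set.mem_diff, Finset.coe_univ, Set.mem_univ, true_and,
          Set.mem_singleton_iff] at ha hb'
        simp only at h
        split_ifs at h with h1 h2 h2 <;> simp only [Prod.mk.injEq] at h
        · exact h.2
        · exact absurd h.2 ha
        · exact absurd h.1 ha
        · exact h.1
      · intro q hq
        simp only [Finset.coe_filter, Set.mem_setOf_eq, Finset.mem_univ, true_and] at hq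
        obtain ⟨⟨hlt, _⟩, htouch⟩ := hq
        rcases htouch with h | h
        · refine ⟨q.2, ?_, ?_⟩
          · simp only [Finset.coe_erase, Set.mem_diff, Finset.coe_univ, Set.mem_univ, true_and,
              Set.mem_singleton_iff]
            rw [← h]; exact ne_of_gt hlt
          · have : i < q.2 := h ▸ hlt
            simp only []; rw [if_pos this]; exact Prod.ext h.symm rfl
        · refine ⟨q.1, ?_, ?_⟩
          · simp only [Finset.coe_erase, Set.mem_diff, Finset.coe_univ, Set.mem_univ, true_and,
              Set.mem_singleton_iff]
            rw [← h]; exact ne_of_lt hlt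
          · have : ¬ i < q.1 := by rw [← h]; exact not_lt.2 (le_of_lt hlt)
            simp only []; rw [if_neg this]; exact Prod.ext rfl h.symm
    rw [hc, Finset.card_erase_of_mem (Finset.mem_univ i), Finset.card_univ, Fintype.card_fin]
    omega
  have h2 : (Finset.univ.filter fun q : Fin (m+1) × Fin (m+1) =>
      (q.1 < q.2 ∧ x q.1 + x q.2 < 0) ∧ ¬(q.1 = i ∨ q.2 = i)).card
      = (Finset.univ.filter fun q : Fin m × Fin m =>
        q.1 < q.2 ∧ x (i.succAbove q.1) + x (i.succAbove q.2) < 0).card := by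
    symm
    apply Finset.card_nbij (fun q => (i.succAbove q.1, i.succAbove q.2))
    · intro q hq
      simp only [Finset.mem_coe, Finset.mem_filter, Finset.mem_univ, true_and] at hq ⊢
      exact ⟨⟨Fin.succAbove_lt_succAbove_iff.2 hq.1, hq.2⟩, by simp [Fin.succAbove_ne]⟩
    · intro a _ b _ h
      have h1' := congrArg Prod.fst h
      have h2' := congrArg Prod.snd h
      simp only at h1' h2'
      exact Prod.ext (Fin.succAbove_right_injective h1') (Fin.succAbove_right_injective h2')
    · intro q hq
      simp only [Finset.coe_filter, Set.mem_setOf_eq, Finset.mem_univ, true_and] at hq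
      obtain ⟨⟨hlt, hxx⟩, hni⟩ := hq
      push_neg at hni
      obtain ⟨a, ha⟩ := Fin.exists_succAbove_eq hni.1
      obtain ⟨b, hbb⟩ := Fin.exists_succAbove_eq hni.2
      refine ⟨(a, b), ?_, ?_⟩
      · simp only [Finset.coe_filter, Set.mem_setOf_eq, Finset.mem_univ, true_and]
        constructor
        · rw [← Fin.succAbove_lt_succAbove_iff (p := i), ha, hbb]; exact hlt
        · rw [ha, hbb]; exact hxx
      · simp [ha, hbb]
  omega


lemma threshold {m k : ℕ} (hk : k ≤ m + 1) (i : Fin (m+1)) (j : Fin m) :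
    (m + 1 - k ≤ ((i.succAbove j : Fin (m+1)) : ℕ)) ↔
    (m - (if m + 1 - k ≤ (i : ℕ) then k - 1 else k) ≤ (j : ℕ)) := by
  have hi := i.isLt
  have hj := j.isLt
  rw [succAbove_val]
  split_ifs with h1 h2 h2 <;> omega

lemma countC (m k : ℕ) (hk : k ≤ m + 1) (i : Fin (m+1)) (x : Fin (m+1) → ℤ)
    (hx : x i = -((m : ℤ)+1)) :
    (Finset.univ.filter fun j : Fin (m+1) => m + 1 - k ≤ (j : ℕ) ∧ x j < 0).card
    = (if m + 1 - k ≤ (i : ℕ) then 1 else 0) +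
      (Finset.univ.filter fun j : Fin m =>
        m - (if m + 1 - k ≤ (i : ℕ) then k - 1 else k) ≤ (j : ℕ) ∧ x (i.succAbove j) < 0).card := by
  classical
  have hsplit := Finset.card_filter_add_card_filter_not
    (s := Finset.univ.filter fun j : Fin (m+1) => m + 1 - k ≤ (j : ℕ) ∧ x j < 0)
    (p := fun j : Fin (m+1) => j = i)
  rw [Finset.filter_filter, Finset.filter_filter] at hsplit
  have h1 : (Finset.univ.filter fun j : Fin (m+1) =>
      ((m + 1 - k ≤ (j : ℕ) ∧ x j < 0) ∧ j = i)).card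
      = (if m + 1 - k ≤ (i : ℕ) then 1 else 0) := by
    split_ifs with h
    · have : (Finset.univ.filter fun j : Fin (m+1) =>
          ((m + 1 - k ≤ (j : ℕ) ∧ x j < 0) ∧ j = i)) = {i} := by
        ext j
        simp only [Finset.mem_filter, Finset.mem_univ, true_and, Finset.mem_singleton]
        constructor
        · exact fun hh => hh.2
        · rintro rfl
          refine ⟨⟨h, ?_⟩, rfl⟩
          rw [hx]; omega
      rw [this, Finset.card_singleton]
    · have : (Finset.univ.filter fun j : Fin (m+1) =>
          ((m + 1 - k ≤ (j : ℕ) ∧ x j < 0) ∧ j = i)) = ∅ := by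
        ext j
        simp only [Finset.mem_filter, Finset.mem_univ, true_and, Finset.notMem_empty,
          iff_false, not_and]
        rintro ⟨hh, _⟩ rfl
        exact h hh
      rw [this, Finset.card_empty]
  have h2 : (Finset.univ.filter fun j : Fin (m+1) =>
      ((m + 1 - k ≤ (j : ℕ) ∧ x j < 0) ∧ ¬ j = i)).card
      = (Finset.univ.filter fun j : Fin m =>
        m - (if m + 1 - k ≤ (i : ℕ) then k - 1 else k) ≤ (j : ℕ) ∧ x (i.succAbove j) < 0).card := by
    symm
    apply Finset.card_nbij (fun j => i.succAbove j)
    · intro j hj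
      simp only [Finset.mem_coe, Finset.mem_filter, Finset.mem_univ, true_and] at hj ⊢
      exact ⟨⟨(threshold hk i j).2 hj.1, hj.2⟩, Fin.succAbove_ne i j⟩
    · intro a _ b _ h
      exact Fin.succAbove_right_injective h
    · intro j hj
      simp only [Finset.coe_filter, Set.mem_setOf_eq, Finset.mem_univ, true_and] at hj
      obtain ⟨⟨hge, hneg⟩, hne⟩ := hj
      obtain ⟨a, ha⟩ := Fin.exists_succAbove_eq hne
      refine ⟨a, ?_, ha⟩
      simp only [Finset.coe_filter, Set.mem_setOf_eq, Finset.mem_univ, true_and]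
      rw [← ha] at hge hneg
      exact ⟨(threshold hk i a).1 hge, hneg⟩
  omega


lemma sep_eq (m k : ℕ) (hk : k ≤ m+1) (i : Fin (m+1)) (x : Fin (m+1) → ℤ)
    (hx : x i = -((m : ℤ)+1)) (hb : ∀ j, j ≠ i → |x j| ≤ (m : ℤ)) :
    sep (m+1) k (ypt (m+1)) (toR x) =
    ((2*m - (i : ℕ)) + (if m+1-k ≤ (i : ℕ) then 1 else 0)) +
    sep m (if m+1-k ≤ (i : ℕ) then k-1 else k) (ypt m) (toR fun j => x (i.succAbove j)) := by
  unfold sep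
  rw [filterA_eq, filterB_eq, filterC_eq, filterA_eq, filterB_eq, filterC_eq]
  rw [countA m i x hx hb, countB m i x hx hb, countC m k hk i x hx]
  have := i.isLt
  omega

lemma bound_of_mem {m k : ℕ} {i : Fin (m+1)} {x : Fin (m+1) → ℤ}
    (hx : x ∈ Mfin (m+1) k) (hxi : x i = -((m : ℤ)+1)) :
    ∀ j, j ≠ i → |x j| ≤ (m : ℤ) := by
  obtain ⟨habs, _, hdist, _⟩ := mem_Mfin.mp hx
  intro j hj
  have h1 := habs j
  have h2 := hdist j i hj
  rw [hxi] at h2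
  have hM : |(-((m : ℤ)+1))| = (m : ℤ)+1 := by
    rw [abs_neg]; exact abs_of_nonneg (by positivity)
  rw [hM] at h2
  push_cast at h1
  omega

lemma main_lemma (m k : ℕ) (hm : 1 ≤ m) (hk : k ≤ m+1) (i : Fin (m+1)) :
    ∑ x ∈ (Mfin (m+1) k).filter (fun x => x i = -((m+1 : ℕ) : ℤ)),
      (Polynomial.X : Polynomial ℤ) ^ sep (m+1) k (ypt (m+1)) (toR x)
    = Polynomial.X ^ ((2*m - (i : ℕ)) + (if m+1-k ≤ (i : ℕ) then 1 else 0)) *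
      zeta m (if m+1-k ≤ (i : ℕ) then k-1 else k) := by
  classical
  rw [zeta, Finset.mul_sum]
  have hM : |(-((m : ℤ)+1))| = (m : ℤ)+1 := by
    rw [abs_neg]; exact abs_of_nonneg (by positivity)
  apply Finset.sum_nbij' (i := fun x => fun j => x (i.succAbove j))
    (j := fun x' => i.insertNth (-((m : ℤ)+1)) x')
  · -- forward membership
    intro x hx
    rw [Finset.mem_filter] at hx
    obtain ⟨hxm, hxi⟩ := hx
    have hxi' : x i = -((m : ℤ)+1) := by rw [hxi]; push_cast; ring
    have hb := bound_of_mem hxm hxi'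
    obtain ⟨habs, hnz, hdist, hcon⟩ := mem_Mfin.mp hxm
    rw [mem_Mfin]
    refine ⟨?_, fun j => hnz _, ?_, ?_⟩
    · intro j
      exact hb (i.succAbove j) (Fin.succAbove_ne i j)
    · intro a b hab
      exact hdist _ _ fun h => hab (Fin.succAbove_right_injective h)
    · intro j hj
      apply hcon
      by_contra hge
      push_neg at hge
      have := (threshold hk i j).1 hge
      omega
  · -- backward membership
    intro x' hx'
    obtain ⟨habs, hnz, hdist, hcon⟩ := mem_Mfin.mp hx'
    rw [Finset.mem_filter]
    constructor
    · rw [mem_Mfin]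
      refine ⟨?_, ?_, ?_, ?_⟩
      · intro j
        rcases eq_or_ne j i with rfl | hne
        · rw [Fin.insertNth_apply_same, hM]
          push_cast; omega
        · obtain ⟨a, rfl⟩ := Fin.exists_succAbove_eq hne
          rw [Fin.insertNth_apply_succAbove]
          have := habs a
          push_cast at this ⊢
          omega
      · intro j
        rcases eq_or_ne j i with rfl | hne
        · rw [Fin.insertNth_apply_same]; omega
        · obtain ⟨a, rfl⟩ := Fin.exists_succAbove_eq hne
          rw [Fin.insertNth_apply_succAbove]; exact hnz a
      · intro a b hab
        rcases eq_or_ne a i with ha | ha <;> rcases eq_or_ne b i with hb2 | hb2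
        · exact absurd (ha.trans hb2.symm) hab
        · obtain ⟨b', rfl⟩ := Fin.exists_succAbove_eq hb2
          rw [ha, Fin.insertNth_apply_same, Fin.insertNth_apply_succAbove, hM]
          have := habs b'
          intro h
          omega
        · obtain ⟨a', rfl⟩ := Fin.exists_succAbove_eq ha
          rw [hb2, Fin.insertNth_apply_same, Fin.insertNth_apply_succAbove, hM]
          have := habs a'
          intro h
          omega
        · obtain ⟨a', rfl⟩ := Fin.exists_succAbove_eq ha
          obtain ⟨b', rfl⟩ := Fin.exists_succAbove_eq hb2
          rw [Fin.insertNth_apply_succAbove, Fin.insertNth_apply_succAbove]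
          exact hdist a' b' fun h => hab (congrArg _ h)
      · intro j hj
        rcases eq_or_ne j i with rfl | hne
        · rw [Fin.insertNth_apply_same]
          intro h
          omega
        · obtain ⟨a, rfl⟩ := Fin.exists_succAbove_eq hne
          rw [Fin.insertNth_apply_succAbove]
          apply hcon
          by_contra hge
          push_neg at hge
          have := (threshold hk i a).2 hge
          omega
    · rw [Fin.insertNth_apply_same]
      push_cast; ring
  · -- left inverse
    intro x hx
    rw [Finset.mem_filter] at hx
    funext j
    rcases eq_or_ne j i with rfl | hne
    · rw [Fin.insertNth_apply_same, hx.2]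
      push_cast; ring
    · obtain ⟨a, rfl⟩ := Fin.exists_succAbove_eq hne
      rw [Fin.insertNth_apply_succAbove]
  · -- right inverse
    intro x' _
    funext j
    rw [Fin.insertNth_apply_succAbove]
  · -- values
    intro x hx
    rw [Finset.mem_filter] at hx
    have hxi' : x i = -((m : ℤ)+1) := by rw [hx.2]; push_cast; ring
    rw [← pow_add, sep_eq m k hk i x hxi' (bound_of_mem hx.1 hxi')]



/-- for `p ≥ 3`, `0 ≤ k ≤ p` and a (0-indexed) coordinate `i`,
the partial sum of `ζ_p^k` over the points of `M_p^k` with `x_i = -p` equals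
`t^{2p-i-2} ⋅ ζ_{p-1}^{k}(t)` if `i < p - k` (1-indexed: `i ≤ p - k`, exponent `2p-i-1`),
and `t^{2p-i-1} ⋅ ζ_{p-1}^{k-1}(t)` if `i ≥ p - k` (1-indexed: `i > p - k`, exponent
`2p-i`). -/
theorem partial_sum_xi_eq_neg_p (p k : ℕ) (hp : 3 ≤ p) (hk : k ≤ p) (i : Fin p) :
    ((i : ℕ) < p - k →
      ∑ x ∈ (Mfin p k).filter (fun x => x i = -(p : ℤ)),
          (Polynomial.X : Polynomial ℤ) ^ sep p k (ypt p) (toR x)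
        = Polynomial.X ^ (2 * p - (i : ℕ) - 2) * zeta (p - 1) k) ∧
    (p - k ≤ (i : ℕ) →
      ∑ x ∈ (Mfin p k).filter (fun x => x i = -(p : ℤ)),
          (Polynomial.X : Polynomial ℤ) ^ sep p k (ypt p) (toR x)
        = Polynomial.X ^ (2 * p - (i : ℕ) - 1) * zeta (p - 1) (k - 1)) := by
  obtain ⟨m, rfl⟩ : ∃ m, p = m + 1 := ⟨p - 1, by omega⟩
  have hm : 1 ≤ m := by omega
  have hi := i.isLt
  have hmain := main_lemma m k hm (by omega) i
  constructor
  · intro h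
    have hc : ¬ (m + 1 - k ≤ (i : ℕ)) := by omega
    simp only [if_neg hc] at hmain
    rw [hmain]
    have he : 2 * (m + 1) - (i : ℕ) - 2 = 2 * m - (i : ℕ) + 0 := by omega
    have hz : m + 1 - 1 = m := by omega
    rw [he, hz]
  · intro h
    have hc : m + 1 - k ≤ (i : ℕ) := by omega
    simp only [if_pos hc] at hmain
    rw [hmain]
    have he : 2 * (m + 1) - (i : ℕ) - 1 = 2 * m - (i : ℕ) + 1 := by omega
    have hz : m + 1 - 1 = m := by omega
    rw [he, hz]
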